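/- arXiv:2004.03719 — 2 statements merged into one kernel-verified Lean document; each statement's English description precedes it below -/
import Mathlib

section
/- Let A be a type, let 𝓡 be a set of binary relations on A (so that (A, 𝓡) is a boxes-and-connectors architecture), and let n ≥ 2. Then the following are equivalent: (i) (A, 𝓡) is an n-tier B&C architecture, i.e. there exist sets C 1, …, C n ⊆ A that are pairwise disjoint, nonempty, and cover A, such that for every relation R ∈ 𝓡 and all a, b ∈ A with R a b there exists l with 1 ≤ l < n and a, b ∈ C l ∪ C (l+1); (ii) there exists a surjective homomorphism from (A, 𝓡) to the elementary n-tier architecture 𝒯ₙ, i.e. a surjective map h : A → Fin n such that for every R ∈ 𝓡 and all a, b ∈ A, R a b implies T^L (h a) (h b), i.e. |(h a : ℤ) − (h b : ℤ)| ≤ 1. -/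
/-- The symmetric "linked-to" relation `T^L` of the elementary `n`-tier
architecture `𝒯ₙ`: tiers `i` and `j` are linked iff `|i - j| ≤ 1`. -/
def TL {n : ℕ} (i j : Fin n) : Prop := |((i : ℕ) : ℤ) - ((j : ℕ) : ℤ)| ≤ 1

/-- A boxes-and-connectors architecture `(A, 𝓡)` is an `n`-tier architecture
(i.e. admits a partition into `n` pairwise disjoint nonempty tiers covering `A`
such that every related pair lies in two adjacent tiers) if and only if there
exists a surjective homomorphism from `(A, 𝓡)` to the elementary `n`-tier
architecture `𝒯ₙ`. -/
theorem bc_ntier_iff_surj_hom_to_elementary {A : Type*} (𝓡 : Set (A → A → Prop))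
    (n : ℕ) (hn : 2 ≤ n) :
    (∃ C : Fin n → Set A,
      (∀ i j : Fin n, i ≠ j → Disjoint (C i) (C j)) ∧
      (∀ i : Fin n, (C i).Nonempty) ∧
      (∀ a : A, ∃ i : Fin n, a ∈ C i) ∧
      (∀ R ∈ 𝓡, ∀ a b : A, R a b →
        ∃ (l : ℕ) (hl : l + 1 < n),
          a ∈ C ⟨l, Nat.lt_of_succ_lt hl⟩ ∪ C ⟨l + 1, hl⟩ ∧
          b ∈ C ⟨l, Nat.lt_of_succ_lt hl⟩ ∪ C ⟨l + 1, hl⟩)) ↔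
    (∃ h : A → Fin n, Function.Surjective h ∧
      ∀ R ∈ 𝓡, ∀ a b : A, R a b → TL (h a) (h b)) := by
  constructor
  · rintro ⟨C, hdisj, hne, hcov, hrel⟩
    choose h hh using hcov
    have huniq : ∀ (a : A) (i : Fin n), a ∈ C i → h a = i := by
      intro a i hai
      by_contra hne'
      exact Set.disjoint_left.mp (hdisj _ _ hne') (hh a) hai
    refine ⟨h, ?_, ?_⟩
    · intro i
      obtain ⟨a, ha⟩ := hne i
      exact ⟨a, huniq a i ha⟩
    · intro R hR a b hab
      obtain ⟨l, hl, ha, hb⟩ := hrel R hR a b hab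
      have key : ∀ c : A, c ∈ C ⟨l, Nat.lt_of_succ_lt hl⟩ ∪ C ⟨l + 1, hl⟩ →
          ((h c : ℕ) = l ∨ (h c : ℕ) = l + 1) := by
        intro c hc
        rcases hc with hc | hc
        · left; rw [huniq c _ hc]
        · right; rw [huniq c _ hc]
      rcases key a ha with ha' | ha' <;> rcases key b hb with hb' | hb' <;>
        simp [TL, ha', hb'] <;> omega
  · rintro ⟨h, hsurj, hhom⟩
    refine ⟨fun i => h ⁻¹' {i}, ?_, ?_, ?_, ?_⟩
    · intro i j hij
      exact Set.disjoint_left.mpr fun a hai haj => hij (hai.symm.trans haj)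
    · intro i
      obtain ⟨a, ha⟩ := hsurj i
      exact ⟨a, ha⟩
    · intro a; exact ⟨h a, rfl⟩
    · intro R hR a b hab
      have htl := hhom R hR a b hab
      rw [TL, abs_le] at htl
      obtain ⟨h1, h2⟩ := htl
      have hi' : (h a : ℕ) < n := (h a).isLt
      have hj' : (h b : ℕ) < n := (h b).isLt
      by_cases hcase : min (h a : ℕ) (h b : ℕ) + 1 < n
      · refine ⟨min (h a : ℕ) (h b : ℕ), hcase, ?_, ?_⟩
        · have hd : (h a : ℕ) = min (h a : ℕ) (h b : ℕ) ∨
              (h a : ℕ) = min (h a : ℕ) (h b : ℕ) + 1 := by omega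
          rcases hd with hd | hd
          · left; exact Fin.ext hd
          · right; exact Fin.ext hd
        · have hd : (h b : ℕ) = min (h a : ℕ) (h b : ℕ) ∨
              (h b : ℕ) = min (h a : ℕ) (h b : ℕ) + 1 := by omega
          rcases hd with hd | hd
          · left; exact Fin.ext hd
          · right; exact Fin.ext hd
      · refine ⟨n - 2, by omega, ?_, ?_⟩
        · right; exact Fin.ext (show (h a : ℕ) = n - 2 + 1 by omega)
        · right; exact Fin.ext (show (h b : ℕ) = n - 2 + 1 by omega)
end

section
/- Every (n+1)-tier architecture is an n-tier architecture (obtained by merging two adjacent tiers): let A be a type, let 𝓡 be a set of finitary relations on A (a k-ary relation being a predicate on tuples Fin k → A), let n ≥ 2, and suppose there are sets C 1, …, C (n+1) ⊆ A that are pairwise disjoint, nonempty, and cover A, such that for every relation R ∈ 𝓡 of arity k and every tuple (a₁, …, a_k) satisfying R there exists l with 1 ≤ l < n+1 and a_j ∈ C l ∪ C (l+1) for all j. Then the sets C* 1 = C 1 ∪ C 2 and C* j = C (j+1) for 2 ≤ j ≤ n are pairwise disjoint, nonempty, and cover A, and for every relation R ∈ 𝓡 of arity k and every tuple (a₁, …,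 a_k) satisfying R there exists l with 1 ≤ l < n and a_j ∈ C* l ∪ C* (l+1) for all j; hence A with the partition C* 1, …, C* n is an n-tier architecture. -/
set_option maxHeartbeats 2000000 in
/-- Every `(n+1)`-tier architecture is an `n`-tier architecture, obtained by
merging the first two (adjacent) tiers: if `C 1, …, C (n+1)` (here 0-indexed by
`Fin (n+1)`) is an `(n+1)`-tier structure for the finitary relations `𝓡`, then
the sets `C* 1 = C 1 ∪ C 2` and `C* j = C (j+1)` for `j ≥ 2` form an `n`-tier
structure for `𝓡`. -/
theorem ntier_succ_merge {A : Type*} (𝓡 : Set (Σ k : ℕ, (Fin k → A) → Prop))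
    (n : ℕ) (hn : 2 ≤ n) (C : Fin (n + 1) → Set A)
    (hdisj : ∀ i j : Fin (n + 1), i ≠ j → Disjoint (C i) (C j))
    (hne : ∀ i : Fin (n + 1), (C i).Nonempty)
    (hcover : ∀ a : A, ∃ i : Fin (n + 1), a ∈ C i)
    (htier : ∀ R ∈ 𝓡, ∀ a : Fin R.1 → A, R.2 a →
      ∃ (l : ℕ) (hl : l + 1 < n + 1),
        ∀ j : Fin R.1, a j ∈ C ⟨l, Nat.lt_of_succ_lt hl⟩ ∪ C ⟨l + 1, hl⟩) :
    ∀ Cs : Fin n → Set A,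
      (∀ j : Fin n, Cs j = if (j : ℕ) = 0 then C 0 ∪ C 1 else C j.succ) →
      (∀ i j : Fin n, i ≠ j → Disjoint (Cs i) (Cs j)) ∧
      (∀ i : Fin n, (Cs i).Nonempty) ∧
      (∀ a : A, ∃ i : Fin n, a ∈ Cs i) ∧
      (∀ R ∈ 𝓡, ∀ a : Fin R.1 → A, R.2 a →
        ∃ (l : ℕ) (hl : l + 1 < n),
          ∀ j : Fin R.1, a j ∈ Cs ⟨l, Nat.lt_of_succ_lt hl⟩ ∪ Cs ⟨l + 1, hl⟩) := by
  intro Cs hCs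
  have h0 : (0 : Fin (n+1)) = ⟨0, by omega⟩ := by ext; simp
  have h1 : (1 : Fin (n+1)) = ⟨1, by omega⟩ := by ext; simp [Fin.val_one']; omega
  have key : ∀ (m : ℕ) (h : m < n),
      Cs ⟨m, h⟩ = if m = 0 then C ⟨0, by omega⟩ ∪ C ⟨1, by omega⟩
        else C ⟨m + 1, by omega⟩ := by
    intro m h
    rw [hCs ⟨m, h⟩]
    simp only [Fin.succ_mk, h0, h1]
  have keyD : ∀ (p q : ℕ) (hp : p < n+1) (hq : q < n+1), p ≠ q →
      Disjoint (C ⟨p, hp⟩) (C ⟨q, hq⟩) := by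
    intro p q hp hq hpq
    exact hdisj _ _ (by simp [Fin.ext_iff, hpq])
  refine ⟨?_, ?_, ?_, ?_⟩
  · rintro ⟨i, hi⟩ ⟨j, hj⟩ hij
    rw [Fin.ne_iff_vne] at hij
    simp only at hij
    rw [key i hi, key j hj]
    by_cases hi0 : i = 0 <;> by_cases hj0 : j = 0 <;> simp only [hi0, hj0, if_true, if_false, reduceIte]
    · omega
    · exact Disjoint.union_left (keyD 0 (j+1) (by omega) (by omega) (by omega))
        (keyD 1 (j+1) (by omega) (by omega) (by omega))
    · exact Disjoint.union_right (keyD (i+1) 0 (by omega) (by omega) (by omega))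
        (keyD (i+1) 1 (by omega) (by omega) (by omega))
    · exact keyD (i+1) (j+1) (by omega) (by omega) (by omega)
  · rintro ⟨i, hi⟩
    rw [key i hi]
    split
    · exact (hne _).mono Set.subset_union_left
    · exact hne _
  · intro a
    obtain ⟨⟨i, hi⟩, ha⟩ := hcover a
    by_cases hi0 : i = 0
    · refine ⟨⟨0, by omega⟩, ?_⟩
      rw [key 0 (by omega), if_pos rfl]
      subst hi0; exact Or.inl ha
    · refine ⟨⟨i - 1, by omega⟩, ?_⟩
      rw [key (i-1) (by omega)]
      by_cases hi1 : i = 1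
      · subst hi1; simp only [if_pos rfl]; exact Or.inr ha
      · rw [if_neg (by omega)]
        have : (⟨i - 1 + 1, by omega⟩ : Fin (n+1)) = ⟨i, hi⟩ := by simp [Fin.ext_iff]; omega
        rw [this]; exact ha
  · intro R hR a haR
    obtain ⟨l, hl, hmem⟩ := htier R hR a haR
    match l, hl, hmem with
    | 0, hl, hmem =>
      refine ⟨0, by omega, fun j => ?_⟩
      rw [key 0 (by omega), key 1 (by omega), if_pos rfl, if_neg one_ne_zero]
      rcases hmem j with h | h
      · exact Or.inl (Or.inl h)
      · exact Or.inl (Or.inr h)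
    | m + 1, hl, hmem =>
      refine ⟨m, by omega, fun j => ?_⟩
      rw [key m (by omega), key (m+1) (by omega), if_neg (Nat.succ_ne_zero m)]
      by_cases hm0 : m = 0
      · subst hm0
        rw [if_pos rfl]
        rcases hmem j with h | h
        · exact Or.inl (Or.inr h)
        · exact Or.inr h
      · rw [if_neg hm0]
        exact hmem j
end
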